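/- arXiv:1303.5624 — 3 statements merged into one kernel-verified Lean document; each statement's English description precedes it below -/
import Mathlib

section
/- For natural numbers a, b with a ≤ b + 1, and any natural d ≤ a, and any real t ≥ 0, one has [a-d](t)·[b+d](t) ≤ [a](t)·[b](t), where [n](t) = 1 + t + ... + t^{n-1}. -/
/-!
Write `[n] = ∑_{i<n} t^i`. Since `[k+1] = [k] + t^k` and `[n+1] = [n] + t^n`, for `k ≤ n`
`[k+1][n] - [k][n+1] = t^k [n] - t^n [k] = t^k [n-k] ≥ 0`,
using `[n] = [n-k] + t^(n-k) [k]`. So moving one unit from the first factor to the second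
(`a - d ↦ a - d - 1`, `b + d ↦ b + d + 1`) never increases the product as long as the first index
stays at most the second, which `a ≤ b + 1` guarantees at every step.
-/

open Finset

theorem geom_sum_add {R : Type*} [Semiring R] (x : R) (m n : ℕ) :
    ∑ i ∈ range (m + n), x ^ i = ∑ i ∈ range m, x ^ i + x ^ m * ∑ i ∈ range n, x ^ i := by
  simp only [sum_range_add, mul_sum, pow_add]

theorem geom_sum_mul_geom_sum_succ_le {R : Type*} [CommSemiring R] [PartialOrder R]
    [IsOrderedRing R] {x : R} (hx : 0 ≤ x) {k n : ℕ} (hkn : k ≤ n) :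
    (∑ i ∈ range k, x ^ i) * ∑ i ∈ range (n + 1), x ^ i ≤
      (∑ i ∈ range (k + 1), x ^ i) * ∑ i ∈ range n, x ^ i := by
  obtain ⟨m, rfl⟩ := Nat.exists_eq_add_of_le' hkn
  have hsplit : x ^ k * ∑ i ∈ range (m + k), x ^ i =
      x ^ k * ∑ i ∈ range m, x ^ i + x ^ (m + k) * ∑ i ∈ range k, x ^ i := by
    rw [geom_sum_add]; ring
  have hnonneg : 0 ≤ x ^ k * ∑ i ∈ range m, x ^ i :=
    mul_nonneg (pow_nonneg hx k) (sum_nonneg fun i _ => pow_nonneg hx i)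
  calc (∑ i ∈ range k, x ^ i) * ∑ i ∈ range (m + k + 1), x ^ i
      = (∑ i ∈ range k, x ^ i) * ∑ i ∈ range (m + k), x ^ i
          + x ^ (m + k) * ∑ i ∈ range k, x ^ i := by rw [sum_range_succ]; ring
    _ ≤ (∑ i ∈ range k, x ^ i) * ∑ i ∈ range (m + k), x ^ i
          + x ^ k * ∑ i ∈ range (m + k), x ^ i := by
        rw [hsplit]; gcongr; exact le_add_of_nonneg_left hnonneg
    _ = (∑ i ∈ range (k + 1), x ^ i) * ∑ i ∈ range (m + k), x ^ i := by
        rw [sum_range_succ]; ring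

/-- For natural numbers `a ≤ b + 1` (with `a ≥ 1`), any natural `d ≤ a` and real `t ≥ 0`,
`[a-d](t) * [b+d](t) ≤ [a](t) * [b](t)`, where `[n](t) = 1 + t + ... + t^(n-1)`. -/
theorem stmt0 (a b d : ℕ) (ha : a ≤ b + 1) (hd : d ≤ a) (t : ℝ) (ht : 0 ≤ t) :
    (∑ i ∈ range (a - d), t ^ i) * (∑ i ∈ range (b + d), t ^ i) ≤
      (∑ i ∈ range a, t ^ i) * (∑ i ∈ range b, t ^ i) := by
  induction d with
  | zero => simp
  | succ d ih =>
    refine le_trans ?_ (ih (Nat.le_of_succ_le hd))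
    have hsucc : a - d = a - (d + 1) + 1 := by omega
    rw [hsucc, ← add_assoc]
    exact geom_sum_mul_geom_sum_succ_le ht (by omega)
end

section
/- Let f₀, f₁, f₂, f₂^Δ be natural numbers with f₂^Δ ≤ f₂, satisfying f₁ ≤ f₀ + f₂ − 2 and 2f₁ ≥ 4f₂ − f₂^Δ. Then for every real t with 0 < t ≤ 1, one has f₂/(t⁻¹+1)² − f₂^Δ/(t⁻¹+1)³ ≤ 2(f₀−2)·t⁻¹/(t⁻¹+1)³, provided f₀ ≥ 2. -/
/-!
With `s = t⁻¹ ≥ 1`, clearing the common denominator `(s + 1)³` reduces the claim to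
`f₂ (s + 1) − f₂Δ ≤ 2 (f₀ − 2) s`. Adding the Euler and side-counting inequalities gives
`2 f₂ − f₂Δ ≤ 2 (f₀ − 2)`, and `f₂ (s + 1) − f₂Δ = (2 f₂ − f₂Δ) s − (f₂ − f₂Δ)(s − 1)`
is at most `(2 f₂ − f₂Δ) s` because `f₂Δ ≤ f₂` and `s ≥ 1`.
-/

lemma mul_add_one_sub_le_mul {K : Type*} [Field K] [LinearOrder K] [IsStrictOrderedRing K]
    {a b c s : K} (hba : b ≤ a) (hc : 2 * a - b ≤ c) (hs : 1 ≤ s) :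
    a * (s + 1) - b ≤ c * s :=
  calc a * (s + 1) - b = (2 * a - b) * s - (a - b) * (s - 1) := by ring
    _ ≤ (2 * a - b) * s := sub_le_self _ (mul_nonneg (sub_nonneg.2 hba) (sub_nonneg.2 hs))
    _ ≤ c * s := mul_le_mul_of_nonneg_right hc (zero_le_one.trans hs)

lemma div_sq_sub_div_pow_three {K : Type*} [Field K] (a b : K) {u : K} (hu : u ≠ 0) :
    a / u ^ 2 - b / u ^ 3 = (a * u - b) / u ^ 3 := by
  field_simp

theorem stmt14_general (f₀ f₁ f₂ f₂Δ : ℕ) (hΔ : f₂Δ ≤ f₂)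
    (euler : (f₁ : ℝ) ≤ (f₀ : ℝ) + (f₂ : ℝ) - 2)
    (sides : 4 * (f₂ : ℝ) - (f₂Δ : ℝ) ≤ 2 * (f₁ : ℝ))
    (t : ℝ) (ht0 : 0 < t) (ht1 : t ≤ 1) :
    (f₂ : ℝ) / (t⁻¹ + 1) ^ 2 - (f₂Δ : ℝ) / (t⁻¹ + 1) ^ 3 ≤
      2 * ((f₀ : ℝ) - 2) * t⁻¹ / (t⁻¹ + 1) ^ 3 := by
  have hs : 1 ≤ t⁻¹ := one_le_inv_iff₀.2 ⟨ht0, ht1⟩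
  have hfaces : 2 * (f₂ : ℝ) - f₂Δ ≤ 2 * ((f₀ : ℝ) - 2) := by linarith
  rw [div_sq_sub_div_pow_three _ _ (by positivity)]
  gcongr
  exact mul_add_one_sub_le_mul (by exact_mod_cast hΔ) hfaces hs

/-- Let `f₀, f₁, f₂, f₂Δ` be natural numbers with `f₂Δ ≤ f₂`, `f₀ ≥ 2`, satisfying the Euler
inequality `f₁ ≤ f₀ + f₂ − 2` and the side-counting inequality `2f₁ ≥ 4f₂ − f₂Δ`. Then for every
real `0 < t ≤ 1`, `f₂/(t⁻¹+1)² − f₂Δ/(t⁻¹+1)³ ≤ 2(f₀−2)·t⁻¹/(t⁻¹+1)³`. -/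
theorem stmt14 (f₀ f₁ f₂ f₂Δ : ℕ) (hΔ : f₂Δ ≤ f₂) (hf₀ : 2 ≤ f₀)
    (euler : (f₁ : ℝ) ≤ (f₀ : ℝ) + (f₂ : ℝ) - 2)
    (sides : 4 * (f₂ : ℝ) - (f₂Δ : ℝ) ≤ 2 * (f₁ : ℝ))
    (t : ℝ) (ht0 : 0 < t) (ht1 : t ≤ 1) :
    (f₂ : ℝ) / (t⁻¹ + 1) ^ 2 - (f₂Δ : ℝ) / (t⁻¹ + 1) ^ 3 ≤
      2 * ((f₀ : ℝ) - 2) * t⁻¹ / (t⁻¹ + 1) ^ 3 :=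
  stmt14_general f₀ f₁ f₂ f₂Δ hΔ euler sides t ht0 ht1
end

section
/- Let Γ be a connected k-regular graph (k ≥ 2, multi-edges allowed) with a distinguished vertex o, and let T_k be the k-regular tree with root õ. Then for every n, the number C_n of closed walks of length n in Γ based at o equals ∑_{d=0}^{n} a*_d · c(n,d), where a*_d is the number of closed walks of length d at o with no backtracks, and c(n,d) is the number of walks of length n in T_k between two fixed vertices at distance d. -/
/-- A multigraph, given by its vertices, darts (oriented edges), a fixed-point-free involution
reversing darts, and the source vertex of each dart. -/
structure Multigraph where
  V : Type
  D : Type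
  bar : D → D
  bar_involutive : Function.Involutive bar
  bar_ne : ∀ d : D, bar d ≠ d
  src : D → V

namespace Multigraph

/-- The target of a dart. -/
def tgt (G : Multigraph) (d : G.D) : G.V := G.src (G.bar d)

/-- `G.IsWalkFrom u v w` says the list of darts `w` is a walk from `u` to `v`. -/
def IsWalkFrom (G : Multigraph) : G.V → G.V → List G.D → Prop
  | u, v, [] => u = v
  | u, v, d :: rest => G.src d = u ∧ G.IsWalkFrom (G.tgt d) v rest

/-- A walk has no backtracks if no two consecutive darts are the same edge traversed in
opposite directions (not counted cyclically). -/
def NoBacktrack (G : Multigraph) : List G.D → Prop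
  | d :: e :: rest => G.bar d ≠ e ∧ G.NoBacktrack (e :: rest)
  | _ => True

/-- `G` is `k`-regular: every vertex is the source of exactly `k` darts. -/
def IsRegular (G : Multigraph) (k : ℕ) : Prop :=
  ∀ v : G.V, Nat.card {d : G.D // G.src d = v} = k

/-- `G` is connected: any two vertices are joined by a walk. -/
def Connected (G : Multigraph) : Prop :=
  ∀ u v : G.V, ∃ w : List G.D, G.IsWalkFrom u v w

/-- `Cₙ`: the number of closed walks of length `n` based at `o`. -/
noncomputable def closedWalkCount (G : Multigraph) (o : G.V) (n : ℕ) : ℕ :=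
  Nat.card {w : List G.D // w.length = n ∧ G.IsWalkFrom o o w}

/-- `a*ₙ`: the number of closed walks of length `n` based at `o` without backtracks. -/
noncomputable def nbClosedWalkCount (G : Multigraph) (o : G.V) (n : ℕ) : ℕ :=
  Nat.card {w : List G.D // w.length = n ∧ G.IsWalkFrom o o w ∧ G.NoBacktrack w}

end Multigraph

/-- `treeWalkCount k n d` is the number of walks of length `n` in the `k`-regular tree `T_k`
between two fixed vertices at distance `d` (characterized by conditioning on the last step of
the walk). -/
def treeWalkCount (k : ℕ) : ℕ → ℕ → ℕ
  | 0, 0 => 1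
  | 0, _ + 1 => 0
  | n + 1, 0 => k * treeWalkCount k n 1
  | n + 1, d + 1 => treeWalkCount k n d + (k - 1) * treeWalkCount k n (d + 2)

/-!
Cancelling backtracks reduces every walk `w` to a non-backtracking walk `reduce w` with the same
endpoints (the geodesic in the universal cover between the endpoints of the lift of `w`), so the
closed walks of length `n` at `o` split according to their reduction, a non-backtracking closed walk
of some length `d ≤ n`. The number of walks of length `n` that reduce to a given non-backtracking
walk `p` depends only on `d = |p|`: conditioning on the first dart, if `p = []` any of the `k` darts
`e` at the start can be followed by a walk reducing to `ē`, and if `p = e :: q`, either the first dart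
is `e` and the rest reduces to `q`, or it is one of the other `k - 1` darts `e'` and the rest
reduces to `ē' :: p`. This is the recursion defining `treeWalkCount`.
-/

lemma Nat.card_sigma_of_card_eq {α : Type*} {β : α → Type*} [Finite α] [∀ a, Finite (β a)]
    {c : ℕ} (h : ∀ a, Nat.card (β a) = c) : Nat.card (Sigma β) = Nat.card α * c := by
  have := Fintype.ofFinite α
  simp [Nat.card_sigma, h, Nat.card_eq_fintype_card]

namespace Multigraph

lemma IsRegular.finite_star {G : Multigraph} {k : ℕ} (hreg : G.IsRegular k) (hk : k ≠ 0)
    (v : G.V) : Finite {d : G.D // G.src d = v} :=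
  Nat.finite_of_card_ne_zero (hreg v ▸ hk)

variable {G : Multigraph}

lemma noBacktrack_cons_iff {d : G.D} {p : List G.D} :
    G.NoBacktrack (d :: p) ↔ (∀ e ∈ p.head?, G.bar d ≠ e) ∧ G.NoBacktrack p := by
  cases p <;> simp [NoBacktrack]

variable (G) in
open Classical in
noncomputable def consReduce (d : G.D) : List G.D → List G.D
  | [] => [d]
  | e :: r => if e = G.bar d then r else d :: e :: r

variable (G) in
/-- Backtracks are cancelled from the end of the word backwards, so that the reduction of
`d :: w` is computed from the reduction of `w` and conditioning on the first dart is immediate. -/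
noncomputable def reduce : List G.D → List G.D
  | [] => []
  | d :: w => G.consReduce d (reduce w)

lemma isWalkFrom_consReduce {u v : G.V} {d : G.D} {r : List G.D} (hd : G.src d = u)
    (hr : G.IsWalkFrom (G.tgt d) v r) : G.IsWalkFrom u v (G.consReduce d r) := by
  cases r with
  | nil => exact ⟨hd, hr⟩
  | cons e r =>
    rw [consReduce]
    split_ifs with he
    · subst he
      have htgt : G.tgt (G.bar d) = u := by rw [tgt, G.bar_involutive, hd]
      exact htgt ▸ hr.2
    · exact ⟨hd, hr⟩

lemma noBacktrack_consReduce {d : G.D} {r : List G.D} (hr : G.NoBacktrack r) :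
    G.NoBacktrack (G.consReduce d r) := by
  cases r with
  | nil => trivial
  | cons e r =>
    rw [consReduce]
    split_ifs with he
    · exact (noBacktrack_cons_iff.mp hr).2
    · exact noBacktrack_cons_iff.mpr ⟨by simpa [eq_comm] using he, hr⟩

lemma length_consReduce_le (d : G.D) (r : List G.D) :
    (G.consReduce d r).length ≤ r.length + 1 := by
  cases r with
  | nil => simp [consReduce]
  | cons e r => rw [consReduce]; split_ifs <;> simp only [List.length_cons] <;> omega

lemma isWalkFrom_reduce {u v : G.V} {w : List G.D} (hw : G.IsWalkFrom u v w) :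
    G.IsWalkFrom u v (G.reduce w) := by
  induction w generalizing u with
  | nil => exact hw
  | cons d w ih => exact isWalkFrom_consReduce hw.1 (ih hw.2)

lemma noBacktrack_reduce (w : List G.D) : G.NoBacktrack (G.reduce w) := by
  induction w with
  | nil => trivial
  | cons d w ih => exact noBacktrack_consReduce ih

lemma length_reduce_le (w : List G.D) : (G.reduce w).length ≤ w.length := by
  induction w with
  | nil => rfl
  | cons d w ih => exact (length_consReduce_le d _).trans (by simpa using ih)

lemma consReduce_eq_cons_iff {d : G.D} {q r : List G.D} (hr : G.NoBacktrack r)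
    (hq : ∀ e ∈ q.head?, G.bar d ≠ e) : G.consReduce d r = d :: q ↔ r = q := by
  constructor
  · intro h
    cases r with
    | nil => simpa [consReduce, eq_comm] using h
    | cons e r =>
      rw [consReduce] at h
      split_ifs at h with he
      · subst he h
        simp [NoBacktrack, G.bar_involutive d] at hr
      · exact (List.cons.inj h).2
  · rintro rfl
    cases r with
    | nil => rfl
    | cons e r => rw [consReduce, if_neg (by simpa [eq_comm] using hq)]

lemma consReduce_eq_iff_of_head_ne {d : G.D} {p r : List G.D} (hp : ∀ e ∈ p.head?, e ≠ d) :
    G.consReduce d r = p ↔ r = G.bar d :: p := by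
  constructor
  · intro h
    cases r with
    | nil => simp [← h, consReduce] at hp
    | cons e r =>
      rw [consReduce] at h
      split_ifs at h with he
      · rw [he, h]
      · subst h; simp at hp
  · rintro rfl
    simp [consReduce]

lemma isWalkFrom_bar_cons {u v : G.V} {d : G.D} {p : List G.D} (hd : G.src d = u)
    (hp : G.IsWalkFrom u v p) : G.IsWalkFrom (G.tgt d) v (G.bar d :: p) := by
  refine ⟨rfl, ?_⟩
  rwa [tgt, G.bar_involutive, hd]

lemma noBacktrack_bar_cons {d : G.D} {p : List G.D} (hd : ∀ e ∈ p.head?, e ≠ d)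
    (hp : G.NoBacktrack p) : G.NoBacktrack (G.bar d :: p) :=
  noBacktrack_cons_iff.mpr ⟨by simpa [G.bar_involutive d, eq_comm] using hd, hp⟩

def walksSuccEquiv (P : List G.D → Prop) (n : ℕ) (u v : G.V) :
    {w : List G.D // w.length = n + 1 ∧ G.IsWalkFrom u v w ∧ P w} ≃
      Σ d : {d : G.D // G.src d = u},
        {w : List G.D // w.length = n ∧ G.IsWalkFrom (G.tgt d) v w ∧ P (d.1 :: w)} where
  toFun
    | ⟨[], hl, _⟩ => absurd hl (by simp)
    | ⟨d :: w, hl, ⟨hd, hw⟩, hP⟩ => ⟨⟨d, hd⟩, w, Nat.succ.inj hl, hw, hP⟩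
  invFun x := ⟨x.1.1 :: x.2.1, by simp [x.2.2.1], ⟨x.1.2, x.2.2.2.1⟩, x.2.2.2.2⟩
  left_inv := by
    rintro ⟨_ | ⟨d, w⟩, hl, ⟨hd, hw⟩, hP⟩
    · simp at hl
    · rfl
  right_inv _ := rfl

lemma card_walks_reduce_zero {u v : G.V} {p : List G.D} (hp : G.IsWalkFrom u v p) (k : ℕ) :
    Nat.card {w : List G.D // w.length = 0 ∧ G.IsWalkFrom u v w ∧ G.reduce w = p} =
      treeWalkCount k 0 p.length := by
  cases p with
  | nil =>
    have : Unique {w : List G.D // w.length = 0 ∧ G.IsWalkFrom u v w ∧ G.reduce w = []} :=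
      ⟨⟨⟨[], rfl, hp, rfl⟩⟩, fun w ↦ Subtype.ext (List.length_eq_zero_iff.mp w.2.1)⟩
    exact Nat.card_unique
  | cons d p =>
    have : IsEmpty {w : List G.D // w.length = 0 ∧ G.IsWalkFrom u v w ∧ G.reduce w = d :: p} :=
      ⟨fun ⟨w, hl, _, hr⟩ ↦ by simp [List.length_eq_zero_iff.mp hl, reduce] at hr⟩
    exact Nat.card_of_isEmpty

section LocallyFinite

variable [∀ v, Finite {d : G.D // G.src d = v}]

instance finite_walks (P : List G.D → Prop) (n : ℕ) (u v : G.V) :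
    Finite {w : List G.D // w.length = n ∧ G.IsWalkFrom u v w ∧ P w} := by
  induction n generalizing u P with
  | zero =>
    have : Subsingleton {w : List G.D // w.length = 0 ∧ G.IsWalkFrom u v w ∧ P w} :=
      ⟨fun a b ↦ Subtype.ext <|
        (List.length_eq_zero_iff.mp a.2.1).trans (List.length_eq_zero_iff.mp b.2.1).symm⟩
    infer_instance
  | succ n ih => exact Finite.of_equiv _ (walksSuccEquiv P n u v).symm

theorem card_walks_reduce_eq_treeWalkCount {k : ℕ} (hreg : G.IsRegular k) (n : ℕ) :
    ∀ {u v : G.V} {p : List G.D}, G.IsWalkFrom u v p → G.NoBacktrack p →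
      Nat.card {w : List G.D // w.length = n ∧ G.IsWalkFrom u v w ∧ G.reduce w = p} =
        treeWalkCount k n p.length := by
  classical
  induction n with
  | zero => exact fun hp _ ↦ card_walks_reduce_zero hp k
  | succ n ih =>
    intro u v p hp hnb
    have := Fintype.ofFinite {d : G.D // G.src d = u}
    have hcard : Fintype.card {d : G.D // G.src d = u} = k := by
      rw [← Nat.card_eq_fintype_card, hreg u]
    rw [Nat.card_congr (walksSuccEquiv _ n u v), Nat.card_sigma]
    cases p with
    | nil =>
      calc ∑ d, _ = ∑ _d : {d : G.D // G.src d = u}, treeWalkCount k n 1 :=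
            Finset.sum_congr rfl fun d _ ↦ by
              simp only [reduce, consReduce_eq_iff_of_head_ne (p := []) (by simp)]
              exact ih (isWalkFrom_bar_cons d.2 hp) trivial
        _ = treeWalkCount k (n + 1) 0 := by simp [hcard, treeWalkCount]
    | cons e q =>
      obtain ⟨hq_head, hq⟩ := noBacktrack_cons_iff.mp hnb
      have he : G.src e = u := hp.1
      rw [Fintype.sum_eq_add_sum_compl ⟨e, he⟩]
      calc _ = treeWalkCount k n q.length +
              ∑ _d ∈ ({⟨e, he⟩}ᶜ : Finset {d : G.D // G.src d = u}), treeWalkCount k n (q.length + 2) := by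
            congr 1
            · simp only [reduce, consReduce_eq_cons_iff (noBacktrack_reduce _) hq_head]
              exact ih hp.2 hq
            · refine Finset.sum_congr rfl fun d hd ↦ ?_
              have hne : ∀ x ∈ (e :: q).head?, x ≠ d := by
                rintro x ⟨⟩ rfl
                simp at hd
              simp only [reduce, consReduce_eq_iff_of_head_ne hne]
              exact ih (isWalkFrom_bar_cons d.2 hp) (noBacktrack_bar_cons hne hnb)
        _ = treeWalkCount k (n + 1) (e :: q).length := by
            simp [Finset.card_compl, hcard, treeWalkCount]

noncomputable def closedWalksEquivSigmaReduce (o : G.V) (n : ℕ) :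
    {w : List G.D // w.length = n ∧ G.IsWalkFrom o o w} ≃
      Σ d : Fin (n + 1),
        Σ p : {p : List G.D // p.length = d ∧ G.IsWalkFrom o o p ∧ G.NoBacktrack p},
          {w : List G.D // w.length = n ∧ G.IsWalkFrom o o w ∧ G.reduce w = p} where
  toFun w :=
    ⟨⟨(G.reduce w).length, Nat.lt_succ_of_le ((length_reduce_le w.1).trans_eq w.2.1)⟩,
      ⟨G.reduce w, rfl, isWalkFrom_reduce w.2.2, noBacktrack_reduce w.1⟩, ⟨w, w.2.1, w.2.2, rfl⟩⟩
  invFun x := ⟨x.2.2, x.2.2.2.1, x.2.2.2.2.1⟩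
  left_inv _ := rfl
  right_inv := by
    rintro ⟨⟨d, hd⟩, ⟨p, hpl, hp⟩, ⟨w, hl, hw, hr⟩⟩
    dsimp only at hr hpl
    subst hr hpl
    rfl

theorem closedWalkCount_eq_sum {k : ℕ} (hreg : G.IsRegular k) (o : G.V) (n : ℕ) :
    G.closedWalkCount o n =
      ∑ d ∈ Finset.range (n + 1), G.nbClosedWalkCount o d * treeWalkCount k n d := by
  have hlayer (d : Fin (n + 1)) :
      Nat.card (Σ p : {p : List G.D // p.length = d ∧ G.IsWalkFrom o o p ∧ G.NoBacktrack p},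
        {w : List G.D // w.length = n ∧ G.IsWalkFrom o o w ∧ G.reduce w = p}) =
          G.nbClosedWalkCount o d * treeWalkCount k n d :=
    Nat.card_sigma_of_card_eq fun p ↦ by
      rw [card_walks_reduce_eq_treeWalkCount hreg n p.2.2.1 p.2.2.2, p.2.1]
  rw [closedWalkCount, Nat.card_congr (closedWalksEquivSigmaReduce o n), Nat.card_sigma,
    ← Fin.sum_univ_eq_sum_range]
  exact Finset.sum_congr rfl fun d _ ↦ hlayer d

end LocallyFinite

end Multigraph

theorem stmt15_general (G : Multigraph) (o : G.V) (k : ℕ) (hk : 2 ≤ k)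
    (hreg : G.IsRegular k) (n : ℕ) :
    G.closedWalkCount o n =
      ∑ d ∈ Finset.range (n + 1), G.nbClosedWalkCount o d * treeWalkCount k n d := by
  have := hreg.finite_star (by omega)
  exact G.closedWalkCount_eq_sum hreg o n

/-- For a connected `k`-regular multigraph `Γ` (`k ≥ 2`) with distinguished vertex `o`, the
number `Cₙ` of closed walks of length `n` at `o` equals `∑_{d=0}^{n} a*_d · c(n,d)`, where
`a*_d` is the number of non-backtracking closed walks of length `d` at `o`, and `c(n,d)` is the
number of walks of length `n` between two vertices at distance `d` in the `k`-regular tree. -/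
theorem stmt15 (G : Multigraph) (o : G.V) (k : ℕ) (hk : 2 ≤ k)
    (hreg : G.IsRegular k) (hconn : G.Connected) (n : ℕ) :
    G.closedWalkCount o n =
      ∑ d ∈ Finset.range (n + 1), G.nbClosedWalkCount o d * treeWalkCount k n d :=
  stmt15_general G o k hk hreg n
end
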